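/- Let n ≥ 1 be a natural number and R > 1 a real number. Suppose f : ℂ → ℂ has a power series expansion f(z) = ∑_{j=0}^∞ a_j z^j valid on the open ball {z : |z| < R}, and φ : ℂ → ℂⁿ has a power series expansion φ(z) = ∑_{j=0}^∞ c_j z^j valid on the open unit ball {z : |z| < 1}. Then for every natural number k the series ∑_{j=0}^∞ |a_{j+k}| · ‖c_j‖ converges, and moreover the series ∑_{k=0}^∞ ‖∑_{j=0}^∞ a_{j+k} · \overline{c_j}‖² converges, where \overline{c_j} ∈ ℂⁿ denotes the componentwise complex conjugate of c_j and ℂⁿ carries the Euclidean norm. -/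

import Mathlib

/-!
The coefficients of `f` decay like `r⁻ʲ` for some `1 < r < R`, while those of `φ` grow at most
like `t⁻ʲ` for every `t < 1`. Choosing `r⁻¹ < t < 1` makes `‖a (j + k)‖ * ‖c j‖` dominated by
`r⁻ᵏ (r t)⁻ʲ`, so the inner series converge and their sums decay geometrically in `k`.
-/

/-- Componentwise complex conjugate of a vector in `ℂⁿ`. -/
noncomputable def conjVec {n : ℕ} (v : EuclideanSpace ℂ (Fin n)) : EuclideanSpace ℂ (Fin n) :=
  WithLp.toLp 2 (fun i => starRingEnd ℂ (v i))

lemma norm_conjVec {n : ℕ} (v : EuclideanSpace ℂ (Fin n)) : ‖conjVec v‖ = ‖v‖ := by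
  simp [EuclideanSpace.norm_eq, conjVec]

lemma exists_norm_le_mul_inv_pow_of_summable {𝕜 E : Type*} [NormedField 𝕜]
    [SeminormedAddCommGroup E] [NormedSpace 𝕜 E] {c : ℕ → E} {z : 𝕜} (hz : z ≠ 0)
    (h : Summable fun j => z ^ j • c j) : ∃ M, ∀ j, ‖c j‖ ≤ M * ‖z‖⁻¹ ^ j := by
  obtain ⟨M, hM⟩ := h.tendsto_atTop_zero.norm.bddAbove_range
  refine ⟨M, fun j => ?_⟩
  have hj : ‖z‖ ^ j * ‖c j‖ ≤ M := by simpa [norm_smul] using hM ⟨j, rfl⟩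
  rw [inv_pow, ← div_eq_mul_inv, le_div_iff₀ (by positivity)]
  linarith

section GeometricBounds

variable {α γ : ℕ → ℝ} {C M ρ σ : ℝ}

lemma shift_mul_le_geometric (hα0 : ∀ j, 0 ≤ α j) (hγ0 : ∀ j, 0 ≤ γ j)
    (hα : ∀ j, α j ≤ C * ρ ^ j) (hγ : ∀ j, γ j ≤ M * σ ^ j) (k j : ℕ) :
    α (j + k) * γ j ≤ C * M * ρ ^ k * (ρ * σ) ^ j :=
  calc α (j + k) * γ j ≤ C * ρ ^ (j + k) * (M * σ ^ j) :=
        mul_le_mul (hα _) (hγ j) (hγ0 j) ((hα0 _).trans (hα _))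
    _ = C * M * ρ ^ k * (ρ * σ) ^ j := by ring

lemma summable_shift_mul_of_le_geometric (hα0 : ∀ j, 0 ≤ α j) (hγ0 : ∀ j, 0 ≤ γ j)
    (hα : ∀ j, α j ≤ C * ρ ^ j) (hγ : ∀ j, γ j ≤ M * σ ^ j) (hρσ0 : 0 ≤ ρ * σ) (hρσ1 : ρ * σ < 1)
    (k : ℕ) : Summable fun j => α (j + k) * γ j :=
  .of_nonneg_of_le (fun j => mul_nonneg (hα0 _) (hγ0 j))
    (shift_mul_le_geometric hα0 hγ0 hα hγ k)
    ((summable_geometric_of_lt_one hρσ0 hρσ1).mul_left _)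

lemma tsum_shift_mul_le_geometric (hα0 : ∀ j, 0 ≤ α j) (hγ0 : ∀ j, 0 ≤ γ j)
    (hα : ∀ j, α j ≤ C * ρ ^ j) (hγ : ∀ j, γ j ≤ M * σ ^ j) (hρσ0 : 0 ≤ ρ * σ) (hρσ1 : ρ * σ < 1)
    (k : ℕ) :
    ∑' j, α (j + k) * γ j ≤ C * M * (1 - ρ * σ)⁻¹ * ρ ^ k :=
  calc ∑' j, α (j + k) * γ j ≤ ∑' j, C * M * ρ ^ k * (ρ * σ) ^ j :=
        Summable.tsum_le_tsum (shift_mul_le_geometric hα0 hγ0 hα hγ k)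
          (summable_shift_mul_of_le_geometric hα0 hγ0 hα hγ hρσ0 hρσ1 k)
          ((summable_geometric_of_lt_one hρσ0 hρσ1).mul_left _)
    _ = C * M * (1 - ρ * σ)⁻¹ * ρ ^ k := by
        rw [tsum_mul_left, tsum_geometric_of_lt_one hρσ0 hρσ1]; ring

end GeometricBounds

lemma summable_sq_of_le_geometric {x : ℕ → ℝ} {K ρ : ℝ} (hx0 : ∀ k, 0 ≤ x k)
    (hx : ∀ k, x k ≤ K * ρ ^ k) (hρ0 : 0 ≤ ρ) (hρ1 : ρ < 1) : Summable fun k => x k ^ 2 :=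
  .of_nonneg_of_le (fun k => sq_nonneg _)
    (fun k => (pow_le_pow_left₀ (hx0 k) (hx k) 2).trans_eq (by ring))
    ((summable_geometric_of_lt_one (sq_nonneg ρ) (by nlinarith)).mul_left (K ^ 2))

theorem stmt0_general (n : ℕ) (R : ℝ) (hR : 1 < R)
    (f : ℂ → ℂ) (a : ℕ → ℂ)
    (hf : ∀ z : ℂ, ‖z‖ < R → HasSum (fun j : ℕ => a j * z ^ j) (f z))
    (φ : ℂ → EuclideanSpace ℂ (Fin n)) (c : ℕ → EuclideanSpace ℂ (Fin n))
    (hφ : ∀ z : ℂ, ‖z‖ < 1 → HasSum (fun j : ℕ => z ^ j • c j) (φ z)) :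
    (∀ k : ℕ, Summable fun j : ℕ => ‖a (j + k)‖ * ‖c j‖) ∧
      Summable fun k : ℕ => ‖∑' j : ℕ, a (j + k) • conjVec (c j)‖ ^ 2 := by
  obtain ⟨r, hr1, hrR⟩ := exists_between hR
  obtain ⟨t, hrt, ht1⟩ := exists_between (inv_lt_one_of_one_lt₀ hr1)
  have hr0 : 0 < r := one_pos.trans hr1
  have ht0 : 0 < t := (inv_pos.2 hr0).trans hrt
  obtain ⟨C, hC⟩ := exists_norm_le_mul_inv_pow_of_summable (c := a) (z := (r : ℂ))
    (by exact_mod_cast hr0.ne')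
    ((hf r (by rwa [Complex.norm_of_nonneg hr0.le])).summable.congr fun j => mul_comm _ _)
  obtain ⟨M, hM⟩ := exists_norm_le_mul_inv_pow_of_summable (c := c) (z := (t : ℂ))
    (by exact_mod_cast ht0.ne') (hφ t (by rwa [Complex.norm_of_nonneg ht0.le])).summable
  rw [Complex.norm_of_nonneg hr0.le] at hC
  rw [Complex.norm_of_nonneg ht0.le] at hM
  have hρσ0 : 0 ≤ r⁻¹ * t⁻¹ := by positivity
  have hρσ1 : r⁻¹ * t⁻¹ < 1 := by
    rw [← mul_inv, inv_lt_one₀ (by positivity)]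
    nlinarith [mul_inv_cancel₀ hr0.ne']
  have hsum := summable_shift_mul_of_le_geometric (fun j => norm_nonneg (a j))
    (fun j => norm_nonneg (c j)) hC hM hρσ0 hρσ1
  have hdecay (k : ℕ) :
      ‖∑' j, a (j + k) • conjVec (c j)‖ ≤ C * M * (1 - r⁻¹ * t⁻¹)⁻¹ * r⁻¹ ^ k :=
    calc ‖∑' j, a (j + k) • conjVec (c j)‖ ≤ ∑' j, ‖a (j + k)‖ * ‖c j‖ := by
          simpa only [norm_smul, norm_conjVec] using
            norm_tsum_le_tsum_norm (f := fun j => a (j + k) • conjVec (c j))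
              (by simpa only [norm_smul, norm_conjVec] using hsum k)
      _ ≤ _ := tsum_shift_mul_le_geometric (fun j => norm_nonneg (a j))
          (fun j => norm_nonneg (c j)) hC hM hρσ0 hρσ1 k
  exact ⟨hsum, summable_sq_of_le_geometric (fun k => norm_nonneg _) hdecay
    (inv_nonneg.2 hr0.le) (inv_lt_one_of_one_lt₀ hr1)⟩

theorem stmt0 (n : ℕ) (hn : 1 ≤ n) (R : ℝ) (hR : 1 < R)
    (f : ℂ → ℂ) (a : ℕ → ℂ)
    (hf : ∀ z : ℂ, ‖z‖ < R → HasSum (fun j : ℕ => a j * z ^ j) (f z))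
    (φ : ℂ → EuclideanSpace ℂ (Fin n)) (c : ℕ → EuclideanSpace ℂ (Fin n))
    (hφ : ∀ z : ℂ, ‖z‖ < 1 → HasSum (fun j : ℕ => z ^ j • c j) (φ z)) :
    (∀ k : ℕ, Summable fun j : ℕ => ‖a (j + k)‖ * ‖c j‖) ∧
      Summable fun k : ℕ => ‖∑' j : ℕ, a (j + k) • conjVec (c j)‖ ^ 2 :=
  stmt0_general n R hR f a hf φ c hφ
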